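/- arXiv:2110.12128 — 3 statements merged into one kernel-verified Lean document; each statement's English description precedes it below -/
import Mathlib

section
/- Let S be a left cancellative monoid and R an associative ring with an S-grading Γ whose support has d elements. Suppose R_e is nonzero and nil of bounded index s (a^s = 0 for all a ∈ R_e). Then for every g ∈ Supp(Γ), setting k_g = min{o(g), d} where o(g) is the order of g, one has (a_1 a_2 ⋯ a_{k_g})^s = 0 for all a_1, …, a_{k_g} ∈ R_g. -/
/-!
Let `k = k_g`. If `o(g) ≤ d`, then `k = o(g)` and a product of `k` elements of `R_g` lies in
`R_{g^k} = R_e`, which is nil of index `s`. Otherwise `k = d` and, by left cancellation, the `d + 1`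
powers `e = g⁰, g, …, g^d` are distinct; as the support has only `d` elements and contains `e`,
some `R_{g^i}` with `1 ≤ i ≤ d` vanishes, and then the product of the first `i` factors is already
zero.
-/

/-- Product `a * l₀ * l₁ * ⋯` of a nonempty list of ring elements. -/
def mulList {R : Type*} [Mul R] (a : R) (l : List R) : R := l.foldl (· * ·) a

/-- `pw a n` is `aⁿ` for `n ≥ 1` (junk value `0` at `n = 0`). -/
def pw {R : Type*} [Mul R] [Zero R] (a : R) : ℕ → R
  | 0 => 0
  | 1 => a
  | n + 2 => pw a (n + 1) * a

/-- Product of `n` elements given by `f` (junk `0` when `n = 0`). -/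
def finProd {R : Type*} [Mul R] [Zero R] : {n : ℕ} → (Fin n → R) → R
  | 0, _ => 0
  | n + 1, f => mulList (f 0) (List.ofFn fun i : Fin n => f i.succ)

/-- `R ^ n = 0`: every product of `n` elements of `R` vanishes. -/
def PowZero (R : Type*) [Mul R] [Zero R] (n : ℕ) : Prop :=
  ∀ (a : R) (l : List R), l.length + 1 = n → mulList a l = 0

/-- `T ^ n = 0` for a subset `T` of a ring. -/
def PowZeroOn {R : Type*} [Mul R] [Zero R] (T : Set R) (n : ℕ) : Prop :=
  ∀ (a : R) (l : List R), a ∈ T → (∀ x ∈ l, x ∈ T) → l.length + 1 = n → mulList a l = 0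

/-- `a` is nilpotent: `aⁿ = 0` for some `n ≥ 1`. -/
def IsNilE {R : Type*} [Mul R] [Zero R] (a : R) : Prop := ∃ n, 1 ≤ n ∧ pw a n = 0

/-- A nil ring: every element is nilpotent. -/
def IsNilRing (R : Type*) [Mul R] [Zero R] : Prop := ∀ a : R, IsNilE a

/-- An `S`-grading of the ring `R`: a direct sum decomposition into additive
subgroups with `R_g R_h ⊆ R_{gh}`. -/
structure IsGrading {S R : Type*} [Monoid S] [NonUnitalRing R] [DecidableEq S]
    (A : S → AddSubgroup R) : Prop where
  mul_mem : ∀ {g h : S} {x y : R}, x ∈ A g → y ∈ A h → x * y ∈ A (g * h)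
  isInternal : DirectSum.IsInternal A

/-- Grading by an additively written monoid. -/
structure IsAddGrading {S R : Type*} [AddMonoid S] [NonUnitalRing R] [DecidableEq S]
    (A : S → AddSubgroup R) : Prop where
  mul_mem : ∀ {g h : S} {x y : R}, x ∈ A g → y ∈ A h → x * y ∈ A (g + h)
  isInternal : DirectSum.IsInternal A

/-- The subset `T` of a ring is `f`-commutative: there are a semigroup `G` acting on it
from the left and a map `f` with `a*b = f(a,b)·(b*a)`. -/
def IsFCommutativeOn {R : Type*} [Mul R] (T : Set R) : Prop :=
  ∃ (G : Type) (_ : Semigroup G) (act : G → R → R),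
    (∀ l m : G, ∀ x : R, x ∈ T → act (l * m) x = act l (act m x)) ∧
    (∀ l : G, ∀ x : R, x ∈ T → act l x ∈ T) ∧
    (∀ l : G, ∀ x y : R, x ∈ T → y ∈ T → act l (x * y) = act l x * y) ∧
    ∃ f : R → R → G, ∀ a b : R, a ∈ T → b ∈ T → a * b = act (f a b) (b * a)

/-- The ring `R` is `f`-commutative. -/
def IsFCommutative (R : Type*) [Mul R] : Prop :=
  ∃ (G : Type) (_ : Semigroup G) (act : G → R → R),
    (∀ l m : G, ∀ x : R, act (l * m) x = act l (act m x)) ∧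
    (∀ l : G, ∀ x y : R, act l (x * y) = act l x * y) ∧
    ∃ f : R → R → G, ∀ a b : R, a * b = act (f a b) (b * a)

/-- The order of `g`: least `n ≥ 1` with `gⁿ = 1`, and `0` if no such `n` exists. -/
noncomputable def ordOf {S : Type*} [Monoid S] (g : S) : ℕ := sInf {n | 1 ≤ n ∧ g ^ n = 1}

section Products

variable {R : Type*}

lemma mulList_append [Mul R] (a : R) (l₁ l₂ : List R) :
    mulList a (l₁ ++ l₂) = mulList (mulList a l₁) l₂ :=
  List.foldl_append

lemma zero_mulList [MulZeroClass R] (l : List R) : mulList 0 l = 0 := by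
  induction l with
  | nil => rfl
  | cons x l ih => simpa only [mulList, List.foldl_cons, zero_mul] using ih

lemma zero_pw [MulZeroClass R] : ∀ {n : ℕ}, n ≠ 0 → pw (0 : R) n = 0
  | 1, _ => rfl
  | _ + 2, _ => mul_zero _

end Products

section Graded

variable {S R : Type*} [Monoid S] [NonUnitalNonAssocRing R] {A : S → AddSubgroup R}

lemma mulList_mem_pow (hmul : ∀ {g h : S} {x y : R}, x ∈ A g → y ∈ A h → x * y ∈ A (g * h))
    {g : S} : ∀ (l : List R) {h : S} {a : R}, a ∈ A h → (∀ x ∈ l, x ∈ A g) →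
      mulList a l ∈ A (h * g ^ l.length)
  | [], _, _, ha, _ => by simpa [mulList] using ha
  | x :: l, h, a, ha, hl => by
    have := mulList_mem_pow hmul l (hmul ha (hl x List.mem_cons_self))
      fun y hy => hl y (List.mem_cons_of_mem _ hy)
    rw [List.length_cons, pow_succ', ← mul_assoc]
    exact this

lemma finProd_mem_pow (hmul : ∀ {g h : S} {x y : R}, x ∈ A g → y ∈ A h → x * y ∈ A (g * h))
    {g : S} : ∀ {k : ℕ}, k ≠ 0 → ∀ a : Fin k → R, (∀ i, a i ∈ A g) → finProd a ∈ A (g ^ k)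
  | n + 1, _, a, ha => by
    have := mulList_mem_pow hmul (List.ofFn fun i : Fin n => a i.succ) (ha 0)
      (by simp only [List.mem_ofFn]; rintro _ ⟨i, rfl⟩; exact ha _)
    rwa [List.length_ofFn, ← pow_succ'] at this

lemma finProd_eq_zero_of_pow_eq_bot
    (hmul : ∀ {g h : S} {x y : R}, x ∈ A g → y ∈ A h → x * y ∈ A (g * h))
    {g : S} {i : ℕ} (hi : i ≠ 0) (hbot : A (g ^ i) = ⊥) :
    ∀ {k : ℕ}, i ≤ k → ∀ a : Fin k → R, (∀ j, a j ∈ A g) → finProd a = 0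
  | 0, hik, _, _ => absurd hik (by omega)
  | n + 1, hik, a, ha => by
    set l := List.ofFn fun j : Fin n => a j.succ
    have hl : ∀ x ∈ l, x ∈ A g := by
      simp only [l, List.mem_ofFn]; rintro _ ⟨j, rfl⟩; exact ha _
    have hprefix : mulList (a 0) (l.take (i - 1)) ∈ A (g ^ i) := by
      have := mulList_mem_pow hmul (l.take (i - 1)) (ha 0) fun x hx =>
        hl x (List.mem_of_mem_take hx)
      rwa [List.length_take, List.length_ofFn, min_eq_left (by omega), ← pow_succ',
        Nat.sub_add_cancel (Nat.one_le_iff_ne_zero.mpr hi)] at this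
    rw [hbot, AddSubgroup.mem_bot] at hprefix
    change mulList (a 0) l = 0
    rw [← List.take_append_drop (i - 1) l, mulList_append, hprefix, zero_mulList]

end Graded

section Order

variable {S : Type*} [Monoid S]

lemma ordOf_eq_orderOf (g : S) : ordOf g = orderOf g := by
  by_cases hg : IsOfFinOrder g
  · refine le_antisymm (Nat.sInf_le ⟨hg.orderOf_pos, pow_orderOf_eq_one g⟩) ?_
    exact le_csInf ⟨_, hg.orderOf_pos, pow_orderOf_eq_one g⟩ fun n hn =>
      orderOf_le_of_pow_eq_one hn.1 hn.2
  · rw [orderOf_eq_zero hg, ordOf, Nat.sInf_eq_zero]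
    exact Or.inr (Set.eq_empty_of_forall_notMem fun n hn =>
      hg (isOfFinOrder_iff_pow_eq_one.mpr ⟨n, hn.1, hn.2⟩))

lemma pow_injOn_Iic_of_not_orderOf_le [IsLeftCancelMul S] {g : S} {d : ℕ}
    (h : ¬(orderOf g ≠ 0 ∧ orderOf g ≤ d)) : (Set.Iic d).InjOn (g ^ ·) := by
  by_cases h0 : orderOf g = 0
  · let _ : LeftCancelMonoid S := { ‹Monoid S›, ‹IsLeftCancelMul S› with }
    exact fun m _ n _ hmn => (pow_inj_iff_of_orderOf_eq_zero h0).mp hmn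
  · exact pow_injOn_Iio_orderOf.mono fun n (hn : n ≤ d) => show n < orderOf g by omega

lemma exists_pow_notMem_of_injOn {T : Finset S} {g : S} (h1 : 1 ∈ T)
    (hinj : (Set.Iic T.card).InjOn (g ^ ·)) : ∃ i, i ≠ 0 ∧ i ≤ T.card ∧ g ^ i ∉ T := by
  by_contra! hcon
  have hmaps : Set.MapsTo (g ^ ·) (Finset.Iic T.card : Set ℕ) T := by
    intro i hi
    rcases Nat.eq_zero_or_pos i with rfl | hpos
    · simpa using h1
    · exact hcon i hpos.ne' (by simpa using hi)
  have := Finset.card_le_card_of_injOn _ hmaps (by simpa using hinj)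
  rw [Nat.card_Iic] at this
  omega

end Order

theorem stmt_2_general {S R : Type*} [Monoid S] [IsLeftCancelMul S] [DecidableEq S]
    [NonUnitalRing R] (A : S → AddSubgroup R) (hA : IsGrading A)
    (d s : ℕ) (hfin : {g : S | A g ≠ ⊥}.Finite) (hcard : hfin.toFinset.card = d)
    (hs : 1 ≤ s) (hne : A 1 ≠ ⊥) (hnil : ∀ a ∈ A 1, pw a s = 0)
    (g : S) :
    ∀ a : Fin (if ordOf g = 0 then d else min (ordOf g) d) → R,
      (∀ i, a i ∈ A g) → pw (finProd a) s = 0 := by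
  rw [ordOf_eq_orderOf]
  by_cases hord : orderOf g ≠ 0 ∧ orderOf g ≤ d
  · rw [if_neg hord.1, min_eq_left hord.2]
    intro a ha
    apply hnil
    simpa only [pow_orderOf_eq_one] using finProd_mem_pow hA.mul_mem hord.1 a ha
  · have hk : (if orderOf g = 0 then d else min (orderOf g) d) = d := by
      split_ifs <;> omega
    rw [hk]
    intro a ha
    obtain ⟨i, hi, hid, hgi⟩ := exists_pow_notMem_of_injOn (T := hfin.toFinset)
      (by simpa using hne) (hcard ▸ pow_injOn_Iic_of_not_orderOf_le hord)
    rw [finProd_eq_zero_of_pow_eq_bot hA.mul_mem hi (by simpa using hgi) (hcard ▸ hid) a ha]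
    exact zero_pw (by omega)

theorem stmt_2 {S R : Type*} [Monoid S] [IsLeftCancelMul S] [DecidableEq S]
    [NonUnitalRing R] (A : S → AddSubgroup R) (hA : IsGrading A)
    (d s : ℕ) (hfin : {g : S | A g ≠ ⊥}.Finite) (hcard : hfin.toFinset.card = d)
    (hs : 1 ≤ s) (hne : A 1 ≠ ⊥) (hnil : ∀ a ∈ A 1, pw a s = 0)
    (g : S) (hg : A g ≠ ⊥) :
    ∀ a : Fin (if ordOf g = 0 then d else min (ordOf g) d) → R,
      (∀ i, a i ∈ A g) → pw (finProd a) s = 0 :=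
  stmt_2_general A hA d s hfin hcard hs hne hnil g
end

section
/- Let S be a left cancellative monoid and R a ring with a finite S-grading Γ of support size d. If R_e is nonzero and nil of bounded index, then R is S-nil of bounded index: there exists k ∈ ℕ such that a^k = 0 for every homogeneous element a of R. -/
lemma pw_succ {R : Type*} [Mul R] [Zero R] (a : R) (n : ℕ) (hn : 1 ≤ n) :
    pw a (n + 1) = pw a n * a := by
  match n with
  | 0 => omega
  | m + 1 => rfl

lemma pw_add {R : Type*} [NonUnitalRing R] (a : R) (m n : ℕ) (hm : 1 ≤ m) (hn : 1 ≤ n) :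
    pw a (m + n) = pw a m * pw a n := by
  induction n with
  | zero => omega
  | succ n ih =>
    rcases Nat.eq_or_lt_of_le hn with h | h
    · obtain rfl : n = 0 := by omega
      exact pw_succ a m hm
    · have hn1 : 1 ≤ n := by omega
      rw [← Nat.add_assoc, pw_succ a (m + n) (by omega), ih hn1, pw_succ a n hn1, mul_assoc]

lemma pw_mul {R : Type*} [NonUnitalRing R] (a : R) (m n : ℕ) (hm : 1 ≤ m) (hn : 1 ≤ n) :
    pw a (m * n) = pw (pw a m) n := by
  induction n with
  | zero => omega
  | succ n ih =>
    rcases Nat.eq_or_lt_of_le hn with h | h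
    · simp [← h, pw]
    · have hn1 : 1 ≤ n := by omega
      rw [Nat.mul_succ, pw_add a (m * n) m (by simpa using Nat.mul_le_mul hm hn1) hm, ih hn1,
        pw_succ (pw a m) n hn1]

lemma pw_mem {S R : Type*} [Monoid S] [DecidableEq S] [NonUnitalRing R]
    {A : S → AddSubgroup R} (hA : IsGrading A) {g : S} {a : R} (ha : a ∈ A g)
    (n : ℕ) (hn : 1 ≤ n) : pw a n ∈ A (g ^ n) := by
  induction n with
  | zero => omega
  | succ n ih =>
    rcases Nat.eq_or_lt_of_le hn with h | h
    · simpa [← h, pw] using ha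
    · have hn1 : 1 ≤ n := by omega
      rw [pw_succ a n hn1, pow_succ]
      exact hA.mul_mem (ih hn1) ha

lemma pw_zero_of_le {R : Type*} [NonUnitalRing R] (a : R) {i k : ℕ} (hi : 1 ≤ i)
    (hik : i ≤ k) (h : pw a i = 0) : pw a k = 0 := by
  rcases Nat.eq_or_lt_of_le hik with h' | h'
  · rwa [← h']
  · have : k = i + (k - i) := by omega
    rw [this, pw_add a i (k - i) hi (by omega), h, zero_mul]

theorem stmt_3 {S R : Type*} [Monoid S] [IsLeftCancelMul S] [DecidableEq S]
    [NonUnitalRing R] (A : S → AddSubgroup R) (hA : IsGrading A)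
    (d s : ℕ) (hfin : {g : S | A g ≠ ⊥}.Finite) (hcard : hfin.toFinset.card = d)
    (hs : 1 ≤ s) (hne : A 1 ≠ ⊥) (hnil : ∀ a ∈ A 1, pw a s = 0) :
    ∃ k, 1 ≤ k ∧ ∀ (g : S), ∀ a ∈ A g, pw a k = 0 := by
  refine ⟨d * s + d + 1, by omega, fun g a ha => ?_⟩
  by_cases hvanish : ∃ i, 1 ≤ i ∧ i ≤ d + 1 ∧ pw a i = 0
  · obtain ⟨i, hi1, hid, hi0⟩ := hvanish
    exact pw_zero_of_le a hi1 (by omega) hi0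
  · push_neg at hvanish
    -- all powers up to d+1 are nonzero, so the d+1 group elements g, …, g^{d+1}
    -- lie in the support of size d: two coincide.
    have hmaps : ∀ i ∈ Finset.Icc 1 (d + 1), g ^ i ∈ hfin.toFinset := by
      intro i hi
      rw [Finset.mem_Icc] at hi
      rw [Set.Finite.mem_toFinset]
      intro hbot
      have := pw_mem hA ha i hi.1
      rw [hbot, AddSubgroup.mem_bot] at this
      exact hvanish i hi.1 hi.2 this
    have hlt : hfin.toFinset.card < (Finset.Icc 1 (d + 1)).card := by
      rw [hcard, Nat.card_Icc]; omega
    obtain ⟨i, hi, j, hj, hne', heq⟩ :=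
      Finset.exists_ne_map_eq_of_card_lt_of_maps_to hlt hmaps
    rw [Finset.mem_Icc] at hi hj
    -- WLOG i < j
    wlog hij : i < j generalizing i j
    · exact this j hj i hi hne'.symm heq.symm (by omega)
    -- g^(j-i) = 1 by left cancellation
    have hpow : g ^ (j - i) = 1 := by
      have h1 : g ^ i * g ^ (j - i) = g ^ i * 1 := by
        rw [mul_one, ← pow_add]
        rw [show i + (j - i) = j by omega]
        exact heq.symm
      exact mul_left_cancel h1
    have hmem : pw a (j - i) ∈ A 1 := by
      have := pw_mem hA ha (j - i) (by omega)
      rwa [hpow] at this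
    have h0 : pw a ((j - i) * s) = 0 := by
      rw [pw_mul a (j - i) s (by omega) hs]
      exact hnil _ hmem
    have hb : (j - i) * s ≤ d * s := Nat.mul_le_mul_right s (by omega)
    exact pw_zero_of_le a (by simpa using Nat.mul_le_mul (show 1 ≤ j - i by omega) hs) (by omega) h0
end

section
/- Let S be a left cancellative monoid and R a ring with S-grading of support size d. For any integer r > 1 and any homogeneous elements a_1, …, a_{rd} of R, either a_1 a_2 ⋯ a_{rd} = 0, or there exist indices 0 ≤ s_0 < s_1 < ⋯ < s_r ≤ rd such that each partial product a_{s_{i-1}+1} ⋯ a_{s_i} (for i = 1, …, r) has homogeneous degree equal to the neutral element e. -/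
def listProd {R : Type*} [Mul R] [Zero R] : List R → R
  | [] => 0
  | x :: xs => mulList x xs

theorem finProd_eq_listProd {R : Type*} [Mul R] [Zero R] :
    ∀ {n : ℕ} (f : Fin n → R), finProd f = listProd (List.ofFn f)
  | 0, _ => rfl
  | _ + 1, _ => by rw [List.ofFn_succ]; rfl

theorem List.forall₂_ofFn {α β : Type*} {P : α → β → Prop} {n : ℕ} {f : Fin n → α}
    {g : Fin n → β} (h : ∀ i, P (f i) (g i)) : Forall₂ P (ofFn f) (ofFn g) :=
  forall₂_iff_get.2 ⟨by simp, fun i h₁ _ => by simpa using h ⟨i, by simpa using h₁⟩⟩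

section ListProd

variable {R : Type*} [SemigroupWithZero R]

theorem mul_mulList (a b : R) (l : List R) : a * mulList b l = mulList (a * b) l := by
  induction l generalizing b with
  | nil => rfl
  | cons x xs ih => exact (ih (b * x)).trans (congrArg (mulList · xs) (mul_assoc a b x).symm)

theorem listProd_cons (x : R) {l : List R} (hl : l ≠ []) :
    listProd (x :: l) = x * listProd l := by
  obtain ⟨y, ys, rfl⟩ := List.exists_cons_of_ne_nil hl
  exact (mul_mulList x y ys).symm

theorem listProd_append {l₁ l₂ : List R} (h₁ : l₁ ≠ []) (h₂ : l₂ ≠ []) :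
    listProd (l₁ ++ l₂) = listProd l₁ * listProd l₂ := by
  induction l₁ with
  | nil => exact absurd rfl h₁
  | cons x xs ih =>
    rcases eq_or_ne xs [] with rfl | hxs
    · exact listProd_cons x h₂
    · rw [List.cons_append, listProd_cons x (by simp [hxs]), ih hxs, listProd_cons x hxs,
        mul_assoc]

theorem listProd_eq_zero_of_isInfix {l L : List R} (h : l <:+: L) (hl : l ≠ [])
    (h0 : listProd l = 0) : listProd L = 0 := by
  obtain ⟨s, t, rfl⟩ := h
  have hsl : listProd (s ++ l) = 0 := by
    rcases eq_or_ne s [] with rfl | hs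
    · exact h0
    · rw [listProd_append hs hl, h0, mul_zero]
  rcases eq_or_ne t [] with rfl | ht
  · simpa using hsl
  · rw [listProd_append (by simp [hl]) ht, hsl, zero_mul]

end ListProd

section Graded

variable {S R : Type*} [Monoid S] [DecidableEq S] [NonUnitalRing R] {A : S → AddSubgroup R}

theorem listProd_mem (hA : IsGrading A) {l : List R} {m : List S}
    (h : List.Forall₂ (fun x g => x ∈ A g) l m) (hl : l ≠ []) : listProd l ∈ A m.prod := by
  induction h with
  | nil => exact absurd rfl hl
  | @cons x g l' m' hx h' ih =>
    rcases eq_or_ne l' [] with rfl | hl'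
    · rw [List.forall₂_nil_left_iff.1 h', List.prod_singleton]
      exact hx
    · rw [listProd_cons x hl', List.prod_cons]
      exact hA.mul_mem hx (ih hl')

theorem prod_drop_take_mem_support (hA : IsGrading A) {L : List R} {G : List S}
    (hLG : List.Forall₂ (fun x g => x ∈ A g) L G) (hL : listProd L ≠ 0) {i j : ℕ} (hij : i < j)
    (hj : j ≤ G.length) : ((G.drop i).take (j - i)).prod ∈ {g | A g ≠ ⊥} := by
  set seg := (L.drop i).take (j - i)
  have hseg : seg ≠ [] := by
    rw [← List.length_pos_iff]
    simp only [seg, List.length_take, List.length_drop, hLG.length_eq, lt_inf_iff,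
      tsub_pos_iff_lt]
    omega
  have hmem : listProd seg ∈ A ((G.drop i).take (j - i)).prod :=
    listProd_mem hA (List.forall₂_take _ (List.forall₂_drop i hLG)) hseg
  intro hbot
  rw [hbot, AddSubgroup.mem_bot] at hmem
  exact hL (listProd_eq_zero_of_isInfix
    ((List.take_prefix _ _).isInfix.trans (List.drop_suffix _ _).isInfix) hseg hmem)

end Graded

section PrefixProducts

variable {S : Type*} [Monoid S]

theorem prod_take_mul_prod_drop_take (G : List S) {i j : ℕ} (hij : i ≤ j) :
    (G.take i).prod * ((G.drop i).take (j - i)).prod = (G.take j).prod := by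
  rw [← List.prod_append, ← List.take_add, Nat.add_sub_cancel' hij]

variable [IsLeftCancelMul S]

theorem prod_drop_take_eq_one_of_prod_take_eq (G : List S) {i j : ℕ} (hij : i ≤ j)
    (h : (G.take i).prod = (G.take j).prod) : ((G.drop i).take (j - i)).prod = 1 :=
  mul_left_cancel (a := (G.take i).prod) (by rw [prod_take_mul_prod_drop_take G hij, mul_one, h])

theorem prod_take_mem_of_card_lt {G : List S} {T : Finset S}
    (hT : ∀ i j, i < j → j ≤ G.length → ((G.drop i).take (j - i)).prod ∈ T)
    (hcard : T.card < G.length) : ∀ k ≤ G.length, (G.take k).prod ∈ T := by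
  have hpos : ∀ k, 0 < k → k ≤ G.length → (G.take k).prod ∈ T := fun k hk hkG => by
    simpa using hT 0 k hk hkG
  have hone : (1 : S) ∈ T := by
    obtain ⟨i, hi, j, hj, hne, heq⟩ := Finset.exists_ne_map_eq_of_card_lt_of_maps_to
      (s := Finset.Icc 1 G.length) (by simpa using hcard)
      fun k hk => hpos k (Finset.mem_Icc.1 hk).1 (Finset.mem_Icc.1 hk).2
    rw [Finset.mem_Icc] at hi hj
    wlog hlt : i < j generalizing i j
    · exact this j hj i hi hne.symm heq.symm (by omega)
    simpa [prod_drop_take_eq_one_of_prod_take_eq G hlt.le heq] using hT i j hlt hj.2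
  intro k hk
  rcases Nat.eq_zero_or_pos k with rfl | hk0
  · simpa using hone
  · exact hpos k hk0 hk

theorem exists_strictMono_prod_drop_take_eq_one {G : List S} {T : Finset S} {r : ℕ}
    (hT : ∀ k ≤ G.length, (G.take k).prod ∈ T) (hcard : r * T.card ≤ G.length) :
    ∃ st : Fin (r + 1) → ℕ, StrictMono st ∧ st (Fin.last r) ≤ G.length ∧
      ∀ i : Fin r, ((G.drop (st i.castSucc)).take (st i.succ - st i.castSucc)).prod = 1 := by
  classical
  have hlt : T.card * r < (Finset.range (G.length + 1)).card := by
    rw [Finset.card_range, mul_comm]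
    exact Nat.lt_succ_of_le hcard
  obtain ⟨y, -, hy⟩ := Finset.exists_lt_card_fiber_of_mul_lt_card_of_maps_to
    (f := fun k => (G.take k).prod)
    (fun k hk => hT k (Nat.lt_succ_iff.1 (Finset.mem_range.1 hk))) hlt
  obtain ⟨F, hF, hFcard⟩ := Finset.exists_subset_card_eq hy
  set st := F.orderEmbOfFin hFcard
  have hst : ∀ k, st k ≤ G.length ∧ (G.take (st k)).prod = y := fun k => by
    simpa [Nat.lt_succ_iff] using hF (F.orderEmbOfFin_mem hFcard k)
  refine ⟨st, st.strictMono, (hst _).1, fun i => ?_⟩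
  exact prod_drop_take_eq_one_of_prod_take_eq G (st.monotone Fin.castSucc_lt_succ.le)
    ((hst _).2.trans (hst _).2.symm)

end PrefixProducts

theorem stmt_4 {S R : Type*} [Monoid S] [IsLeftCancelMul S] [DecidableEq S]
    [NonUnitalRing R] (A : S → AddSubgroup R) (hA : IsGrading A)
    (d r : ℕ) (hfin : {g : S | A g ≠ ⊥}.Finite) (hcard : hfin.toFinset.card = d)
    (hr : 1 < r)
    (a : Fin (r * d) → R) (g : Fin (r * d) → S) (ha : ∀ i, a i ∈ A (g i)) :
    finProd a = 0 ∨
      ∃ st : Fin (r + 1) → ℕ, StrictMono st ∧ st (Fin.last r) ≤ r * d ∧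
        ∀ i : Fin r,
          (((List.ofFn g).drop (st i.castSucc)).take (st i.succ - st i.castSucc)).prod
            = 1 := by
  rw [or_iff_not_imp_left, finProd_eq_listProd]
  intro hprod
  have hd : d ≠ 0 := by
    rintro rfl
    exact hprod rfl
  have hseg : ∀ i j, i < j → j ≤ (List.ofFn g).length →
      (((List.ofFn g).drop i).take (j - i)).prod ∈ hfin.toFinset := fun i j hij hj =>
    hfin.mem_toFinset.2 (prod_drop_take_mem_support hA (List.forall₂_ofFn ha) hprod hij hj)
  have hprefix := prod_take_mem_of_card_lt hseg (by
    rw [List.length_ofFn, hcard]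
    exact lt_mul_left (Nat.pos_of_ne_zero hd) hr)
  simpa using exists_strictMono_prod_drop_take_eq_one hprefix (by rw [List.length_ofFn, hcard])
end
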